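/- arXiv:2006.06566 — 2 statements merged into one kernel-verified Lean document; each statement's English description precedes it below -/
import Mathlib

section
/- With the setup of the previous construction (payoff function $\tilde{u}^F$ defined via $\widehat{S}$, $k$, $\alpha$, with induced $\widetilde{BR}$ and $j \in \widetilde{BR}(\mathbf{x})$): if $\min_{\ell' \in \widehat{S}} u^L(\mathbf{y},\ell') \leq u^L(\mathbf{x},j)$ holds for all $\mathbf{y} \in \Delta^{m-1}$ such that $\widetilde{BR}(\mathbf{y}) \cap \widehat{S} \neq \emptyset$, then $(\mathbf{x},j)$ is an SSE of the game $(u^L, \tilde{u}^F)$, i.e., $u^L(\mathbf{x},j) \geq u^L(\mathbf{y},\ell)$ for every $\mathbf{y} \in \Delta^{m-1}$ and $\ell \in \widetilde{BR}(\mathbf{y})$. -/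
open Finset

noncomputable section

def simplex (m : ℕ) : Set (Fin m → ℝ) := stdSimplex ℝ (Fin m)

def util {m n : ℕ} (u : Fin m → Fin n → ℝ) (y : Fin m → ℝ) (j : Fin n) : ℝ :=
  ∑ i, y i * u i j

/-!
Against a follower of payoff $\tilde u^F$, a best response outside $\widehat S \cup \{j\}$ never
exists, since $k$ is strictly better. A best response $j$ at $\mathbf y$ means the bonus
$\alpha (u^L(\mathbf x, j) - u^L(\mathbf y, j))$ is nonnegative, i.e. the leader does no better
than at $(\mathbf x, j)$. A best response $\ell \in \widehat S$ minimises $u^L(\mathbf y, \cdot)$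
over $\widehat S$, so the hypothesis bounds $u^L(\mathbf y, \ell)$ by $u^L(\mathbf x, j)$.
At $\mathbf x$ itself, $j$ ties with $k$, the best response within $\widehat S$.
-/

section FakePayoff

variable {Y A : Type*} [DecidableEq A]

def fakePayoff (U : Y → A → ℝ) (x : Y) (j : A) (S : Finset A) (k : A) (α : ℝ)
    (y : Y) (ℓ : A) : ℝ :=
  if ℓ ∈ S then -U y ℓ
  else if ℓ = j then -U y k + α * (U x j - U y j)
  else -U y k - 1

variable {U : Y → A → ℝ} {x y : Y} {j k ℓ ℓ' : A} {S : Finset A} {α : ℝ}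

theorem fakePayoff_of_mem (hℓ : ℓ ∈ S) : fakePayoff U x j S k α y ℓ = -U y ℓ := if_pos hℓ

theorem fakePayoff_self (hjS : j ∉ S) :
    fakePayoff U x j S k α y j = -U y k + α * (U x j - U y j) := by
  simp only [fakePayoff, hjS, if_false, if_true]

theorem fakePayoff_of_not_mem_of_ne (hℓS : ℓ ∉ S) (hℓj : ℓ ≠ j) :
    fakePayoff U x j S k α y ℓ = -U y k - 1 := by
  simp only [fakePayoff, hℓS, hℓj, if_false]

theorem fakePayoff_le_fakePayoff_of_mem (hℓ : ℓ ∈ S) (hℓ' : ℓ' ∈ S) :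
    fakePayoff U x j S k α y ℓ' ≤ fakePayoff U x j S k α y ℓ ↔ U y ℓ ≤ U y ℓ' := by
  rw [fakePayoff_of_mem hℓ, fakePayoff_of_mem hℓ', neg_le_neg_iff]

theorem fakePayoff_le_fakePayoff_self (hjS : j ∉ S) (hk : ∀ ℓ ∈ S, U x k ≤ U x ℓ)
    (ℓ : A) : fakePayoff U x j S k α x ℓ ≤ fakePayoff U x j S k α x j := by
  rw [fakePayoff_self hjS, sub_self, mul_zero, add_zero]
  by_cases hℓS : ℓ ∈ S
  · simpa [fakePayoff_of_mem hℓS] using hk ℓ hℓS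
  by_cases hℓj : ℓ = j
  · rw [hℓj, fakePayoff_self hjS, sub_self, mul_zero, add_zero]
  · rw [fakePayoff_of_not_mem_of_ne hℓS hℓj]
    linarith

theorem fakePayoff_lt_of_not_mem_of_ne (hkS : k ∈ S) (hℓS : ℓ ∉ S) (hℓj : ℓ ≠ j) :
    fakePayoff U x j S k α y ℓ < fakePayoff U x j S k α y k := by
  rw [fakePayoff_of_not_mem_of_ne hℓS hℓj, fakePayoff_of_mem hkS]
  linarith

theorem le_of_fakePayoff_le_fakePayoff_self (hjS : j ∉ S) (hkS : k ∈ S) (hα : 0 < α)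
    (h : fakePayoff U x j S k α y k ≤ fakePayoff U x j S k α y j) : U y j ≤ U x j := by
  rw [fakePayoff_self hjS, fakePayoff_of_mem hkS, le_add_iff_nonneg_right] at h
  exact sub_nonneg.mp (nonneg_of_mul_nonneg_right (by linarith) hα)

theorem le_of_isBestResponse_fakePayoff (hjS : j ∉ S) (hkS : k ∈ S) (hα : 0 < α)
    (hcond : (∃ ℓ ∈ S, ∀ ℓ', fakePayoff U x j S k α y ℓ' ≤ fakePayoff U x j S k α y ℓ) →
      ∃ ℓ' ∈ S, U y ℓ' ≤ U x j)
    (hbest : ∀ ℓ', fakePayoff U x j S k α y ℓ' ≤ fakePayoff U x j S k α y ℓ) :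
    U y ℓ ≤ U x j := by
  by_cases hℓS : ℓ ∈ S
  · obtain ⟨ℓ', hℓ'S, hℓ'⟩ := hcond ⟨ℓ, hℓS, hbest⟩
    exact ((fakePayoff_le_fakePayoff_of_mem hℓS hℓ'S).mp (hbest ℓ')).trans hℓ'
  by_cases hℓj : ℓ = j
  · subst hℓj
    exact le_of_fakePayoff_le_fakePayoff_self hjS hkS hα (hbest k)
  · exact absurd (hbest k) (fakePayoff_lt_of_not_mem_of_ne hkS hℓS hℓj).not_ge

end FakePayoff

theorem stmt_8_general (m n : ℕ) (uL : Fin m → Fin n → ℝ)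
    (x : Fin m → ℝ) (j : Fin n)
    (S : Finset (Fin n)) (hjS : j ∉ S)
    (k : Fin n) (hkS : k ∈ S) (hk : ∀ ℓ ∈ S, util uL x k ≤ util uL x ℓ)
    (α : ℝ) (hα : 0 < α)
    (v : (Fin m → ℝ) → Fin n → ℝ)
    (hv : ∀ y ℓ, v y ℓ =
      if ℓ ∈ S then -util uL y ℓ
      else if ℓ = j then -util uL y k + α * (util uL x j - util uL y j)
      else -util uL y k - 1)
    (hcond : ∀ y ∈ simplex m, (∃ ℓ ∈ S, ∀ k', v y k' ≤ v y ℓ) →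
      ∃ ℓ' ∈ S, util uL y ℓ' ≤ util uL x j) :
    (∀ ℓ, v x ℓ ≤ v x j) ∧
    ∀ y ∈ simplex m, ∀ ℓ, (∀ k', v y k' ≤ v y ℓ) → util uL y ℓ ≤ util uL x j := by
  obtain rfl : v = fakePayoff (util uL) x j S k α := funext₂ hv
  exact ⟨fakePayoff_le_fakePayoff_self hjS hk,
    fun y hy _ hbest => le_of_isBestResponse_fakePayoff hjS hkS hα (hcond y hy) hbest⟩

/-- Lemma (key condition): if the min over $\widehat S$ is at most $u^L(x,j)$ whenever
some member of $\widehat S$ is a fake best response, then $(x,j)$ is an SSE of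
$(u^L, \tilde u^F)$. -/
theorem stmt_8 (m n : ℕ) (uL : Fin m → Fin n → ℝ)
    (x : Fin m → ℝ) (hx : x ∈ simplex m) (j : Fin n)
    (S : Finset (Fin n)) (hS : S.Nonempty) (hjS : j ∉ S)
    (k : Fin n) (hkS : k ∈ S) (hk : ∀ ℓ ∈ S, util uL x k ≤ util uL x ℓ)
    (α : ℝ) (hα : 0 < α)
    (v : (Fin m → ℝ) → Fin n → ℝ)
    (hv : ∀ y ℓ, v y ℓ =
      if ℓ ∈ S then -util uL y ℓ
      else if ℓ = j then -util uL y k + α * (util uL x j - util uL y j)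
      else -util uL y k - 1)
    (hcond : ∀ y ∈ simplex m, (∃ ℓ ∈ S, ∀ k', v y k' ≤ v y ℓ) →
      ∃ ℓ' ∈ S, util uL y ℓ' ≤ util uL x j) :
    (∀ ℓ, v x ℓ ≤ v x j) ∧
    ∀ y ∈ simplex m, ∀ ℓ, (∀ k', v y k' ≤ v y ℓ) → util uL y ℓ ≤ util uL x j :=
  stmt_8_general m n uL x j S hjS k hkS hk α hα v hv hcond
end
end

section
/- Suppose $u^L(\mathbf{x},j) < M_{-j} := \max_{\mathbf{y} \in \Delta^{m-1}} \min_{\ell \in [n]\setminus\{j\}} u^L(\mathbf{y},\ell)$ and $u^L(\mathbf{x},j) \geq V := \max_{\mathbf{y} \in \overline{U_j(\mathbf{x})}} \min_{\ell \in [n]\setminus\{j\}} u^L(\mathbf{y},\ell)$, where $U_j(\mathbf{x}) = \{\mathbf{y} \in \Delta^{m-1} : u^L(\mathbf{y},j) > u^L(\mathbf{x},j)\}$ is nonempty and $\mathbf{y}^* \in \overline{U_j(\mathbf{x})}$ attains $\min_{\ell \neq j} u^L(\mathbf{y}^*,\ell) = V$. Then $u^L(\mathbf{y}^*,j) = u^L(\mathbf{x},j)$.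 -/
/-!
If `u(y*, j) > u(x, j)`, move from `y*` a little towards a point `z` of the simplex with
`u(z, ℓ) > u(x, j) ≥ V` for all `ℓ ≠ j`. For a small step the new point stays in `U_j(x)`,
while by linearity every `u(·, ℓ)` with `ℓ ≠ j` becomes strictly larger than `V`,
contradicting the maximality of `V` on the closure of `U_j(x)`.
-/

open Finset

noncomputable section

open AffineMap

theorem exists_lineMap_mem_of_mem_nhds {E : Type*} [AddCommGroup E] [Module ℝ E]
    [TopologicalSpace E] [IsTopologicalAddGroup E] [ContinuousSMul ℝ E]
    {s : Set E} {y : E} (hs : s ∈ nhds y) (z : E) :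
    ∃ t ∈ Set.Ioo (0 : ℝ) 1, lineMap y z t ∈ s := by
  have hpre : lineMap y z ⁻¹' s ∈ nhds (0 : ℝ) :=
    lineMap_continuous.continuousAt.preimage_mem_nhds (by rwa [lineMap_apply_zero])
  exact (Filter.Eventually.and (Ioo_mem_nhdsGT one_pos) (nhdsWithin_le_nhds hpre)).exists

theorem lt_lineMap_of_le_of_lt {a b c t : ℝ} (ha : c ≤ a) (hb : c < b) (ht₀ : 0 < t)
    (ht₁ : t ≤ 1) : c < lineMap a b t := by
  rw [lineMap_apply_ring']
  nlinarith

theorem continuous_util {m n : ℕ} (u : Fin m → Fin n → ℝ) (j : Fin n) :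
    Continuous fun y => util u y j :=
  continuous_finsetSum _ fun i _ => (continuous_apply i).mul continuous_const

theorem util_lineMap {m n : ℕ} (u : Fin m → Fin n → ℝ) (y z : Fin m → ℝ) (t : ℝ) (ℓ : Fin n) :
    util u (lineMap y z t) ℓ = lineMap (util u y ℓ) (util u z ℓ) t := by
  simp only [util, lineMap_apply_module, Pi.add_apply, Pi.smul_apply,
    smul_eq_mul, mul_sum, ← sum_add_distrib]
  exact sum_congr rfl fun i _ => by ring

theorem closure_util_lt_subset {m n : ℕ} (u : Fin m → Fin n → ℝ) (c : ℝ) (j : Fin n) :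
    closure {z | z ∈ simplex m ∧ c < util u z j} ⊆ {z | z ∈ simplex m ∧ c ≤ util u z j} :=
  closure_minimal (fun _ hz => ⟨hz.1, hz.2.le⟩)
    ((isClosed_stdSimplex ℝ (Fin m)).inter (isClosed_le continuous_const (continuous_util u j)))

theorem stmt_9_general (m n : ℕ) (uL : Fin m → Fin n → ℝ)
    (x : Fin m → ℝ) (j : Fin n)
    (hMj : ∃ z ∈ simplex m, ∀ ℓ, ℓ ≠ j → util uL x j < util uL z ℓ)
    (V : ℝ) (ystar : Fin m → ℝ)
    (hystar : ystar ∈ closure {z | z ∈ simplex m ∧ util uL x j < util uL z j})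
    (hmin1 : ∀ ℓ, ℓ ≠ j → V ≤ util uL ystar ℓ)
    (hVmax : ∀ y ∈ closure {z | z ∈ simplex m ∧ util uL x j < util uL z j},
      ∃ ℓ, ℓ ≠ j ∧ util uL y ℓ ≤ V)
    (hxV : V ≤ util uL x j) :
    util uL ystar j = util uL x j := by
  obtain ⟨hyS, hge⟩ := closure_util_lt_subset uL (util uL x j) j hystar
  refine le_antisymm ?_ hge
  by_contra! hlt
  obtain ⟨z, hzS, hz⟩ := hMj
  obtain ⟨t, ⟨ht₀, ht₁⟩, hwj⟩ := exists_lineMap_mem_of_mem_nhds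
    ((isOpen_lt continuous_const (continuous_util uL j)).mem_nhds hlt) z
  have hwS : lineMap ystar z t ∈ simplex m :=
    (convex_stdSimplex ℝ (Fin m)).lineMap_mem hyS hzS ⟨ht₀.le, ht₁.le⟩
  obtain ⟨ℓ, hℓ, hle⟩ := hVmax _ (subset_closure ⟨hwS, hwj⟩)
  rw [util_lineMap] at hle
  exact hle.not_gt (lt_lineMap_of_le_of_lt (hmin1 ℓ hℓ) (hxV.trans_lt (hz ℓ hℓ)) ht₀ ht₁.le)

/-- Lemma: $u^L(y^*, j) = u^L(x, j)$. -/
theorem stmt_9 (m n : ℕ) (hn : 2 ≤ n) (uL : Fin m → Fin n → ℝ)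
    (x : Fin m → ℝ) (hx : x ∈ simplex m) (j : Fin n)
    (hMj : ∃ z ∈ simplex m, ∀ ℓ, ℓ ≠ j → util uL x j < util uL z ℓ)
    (hU : ∃ y ∈ simplex m, util uL x j < util uL y j)
    (V : ℝ) (ystar : Fin m → ℝ)
    (hystar : ystar ∈ closure {z | z ∈ simplex m ∧ util uL x j < util uL z j})
    (hmin1 : ∀ ℓ, ℓ ≠ j → V ≤ util uL ystar ℓ)
    (hmin2 : ∃ ℓ, ℓ ≠ j ∧ util uL ystar ℓ = V)
    (hVmax : ∀ y ∈ closure {z | z ∈ simplex m ∧ util uL x j < util uL z j},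
      ∃ ℓ, ℓ ≠ j ∧ util uL y ℓ ≤ V)
    (hxV : V ≤ util uL x j) :
    util uL ystar j = util uL x j :=
  stmt_9_general m n uL x j hMj V ystar hystar hmin1 hVmax hxV
end
end
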